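/- Suppose in addition that f is continuous at Lebesgue-almost every point of [0,1]^d. For each k ≥ 0 let U_k ⊆ [0,1]^d × [0,C] be the union of all level-k cells visited by f. Then the (d+1)-dimensional Lebesgue measure of ⋂_{k≥0} U_k is zero. (Hence, up to a null set, every point of [0,1]^d × [0,C] eventually lies in a cell on which acceptance or rejection can be decided; Theorem 2.) -/

import Mathlib

/-- The dyadic cube `R* = ∏_i [m_i·2^{-k}, (m_i+1)·2^{-k}]` of the level-`k` grid. -/
def dyadicCube (d k : ℕ) (m : Fin d → ℕ) : Set (Fin d → ℝ) :=
  {x | ∀ i, (m i : ℝ) / 2 ^ k ≤ x i ∧ x i ≤ ((m i : ℝ) + 1) / 2 ^ k}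

/-- The level-`k` cell `R* × [j·C·2^{-k}, (j+1)·C·2^{-k}]` is visited by `f` if
`sup_{R*} f ≥ j·C·2^{-k}` and `inf_{R*} f ≤ (j+1)·C·2^{-k}`. -/
def VisitedCell (d k : ℕ) (C : ℝ) (f : (Fin d → ℝ) → ℝ) (m : Fin d → ℕ) (j : ℕ) : Prop :=
  (j : ℝ) * C / 2 ^ k ≤ sSup (f '' dyadicCube d k m) ∧
    sInf (f '' dyadicCube d k m) ≤ ((j : ℝ) + 1) * C / 2 ^ k

/-- `N_k`, the number of level-`k` cells visited by `f`. -/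
noncomputable def Nvisited (d : ℕ) (C : ℝ) (f : (Fin d → ℝ) → ℝ) (k : ℕ) : ℕ :=
  {p : (Fin d → ℕ) × ℕ |
    (∀ i, p.1 i < 2 ^ k) ∧ p.2 < 2 ^ k ∧ VisitedCell d k C f p.1 p.2}.ncard

/-- The upper dyadic Darboux sum `I_k^+ = 2^{-dk} Σ_{R*} sup_{R*} f`. -/
noncomputable def Iplus (d : ℕ) (f : (Fin d → ℝ) → ℝ) (k : ℕ) : ℝ :=
  ((2 : ℝ) ^ (d * k))⁻¹ *
    ∑ m ∈ Fintype.piFinset (fun _ : Fin d => Finset.range (2 ^ k)),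
      sSup (f '' dyadicCube d k m)

/-- The lower dyadic Darboux sum `I_k^- = 2^{-dk} Σ_{R*} inf_{R*} f`. -/
noncomputable def Iminus (d : ℕ) (f : (Fin d → ℝ) → ℝ) (k : ℕ) : ℝ :=
  ((2 : ℝ) ^ (d * k))⁻¹ *
    ∑ m ∈ Fintype.piFinset (fun _ : Fin d => Finset.range (2 ^ k)),
      sInf (f '' dyadicCube d k m)

open MeasureTheory

/-- `U_k`, the union of all level-`k` cells visited by `f`, as a subset of `ℝ^d × ℝ`. -/
def visitedUnion (d : ℕ) (C : ℝ) (f : (Fin d → ℝ) → ℝ) (k : ℕ) :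
    Set ((Fin d → ℝ) × ℝ) :=
  ⋃ (p : (Fin d → ℕ) × ℕ)
    (_ : (∀ i, p.1 i < 2 ^ k) ∧ p.2 < 2 ^ k ∧ VisitedCell d k C f p.1 p.2),
    dyadicCube d k p.1 ×ˢ Set.Icc ((p.2 : ℝ) * C / 2 ^ k) (((p.2 : ℝ) + 1) * C / 2 ^ k)

/-! `⋂ₖ U_k` is measurable, so by Fubini it suffices that almost every vertical
slice is null. At a continuity point `x` of `f`, the oscillation of `f` on the level-`k` cube
containing `x` and the height `C·2^{-k}` of the cells both tend to `0`, so a point `(x, y)`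
lying in a visited cell at every level must have `y = f x`; the slice over `x` is then at most
a point. -/

open Set Filter Topology

lemma Measure.prod_null_of_ae_slice_subset_singleton {α : Type*} [MeasurableSpace α]
    {μ : Measure α} [SFinite μ] {s : Set (α × ℝ)} (hs : MeasurableSet s)
    (h : ∀ᵐ x ∂μ, ∃ y, Prod.mk x ⁻¹' s ⊆ {y}) : μ.prod volume s = 0 := by
  rw [Measure.measure_prod_null hs]
  filter_upwards [h] with x ⟨y, hy⟩
  exact measure_mono_null hy (measure_singleton y)

lemma dyadicCube_eq_Icc (d k : ℕ) (m : Fin d → ℕ) :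
    dyadicCube d k m = Icc (fun i => (m i : ℝ) / 2 ^ k) (fun i => ((m i : ℝ) + 1) / 2 ^ k) := by
  ext x
  simp [dyadicCube, Pi.le_def, forall_and]

lemma dyadicCube_subset_Icc {d k : ℕ} {m : Fin d → ℕ} (hm : ∀ i, m i < 2 ^ k) :
    dyadicCube d k m ⊆ Icc 0 1 := by
  rw [dyadicCube_eq_Icc]
  refine Icc_subset_Icc (fun i => by positivity) (fun i => ?_)
  rw [Pi.one_apply, div_le_one (by positivity)]
  exact_mod_cast hm i

lemma dist_le_of_mem_dyadicCube {d k : ℕ} {m : Fin d → ℕ} {x x' : Fin d → ℝ}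
    (hx : x ∈ dyadicCube d k m) (hx' : x' ∈ dyadicCube d k m) : dist x' x ≤ 1 / 2 ^ k := by
  rw [dist_pi_le_iff (by positivity)]
  intro i
  have hwidth : ((m i : ℝ) + 1) / 2 ^ k - (m i : ℝ) / 2 ^ k = 1 / 2 ^ k := by ring
  rw [Real.dist_eq, abs_le]
  constructor <;> linarith [hx i, hx' i]

lemma measurableSet_visitedUnion (d : ℕ) (C : ℝ) (f : (Fin d → ℝ) → ℝ) (k : ℕ) :
    MeasurableSet (visitedUnion d C f k) :=
  .iUnion fun p => .iUnion fun _ =>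
    (dyadicCube_eq_Icc d k p.1 ▸ measurableSet_Icc).prod measurableSet_Icc

lemma mem_Icc_of_mem_visitedUnion {d k : ℕ} {C : ℝ} {f : (Fin d → ℝ) → ℝ} {x : Fin d → ℝ}
    {y : ℝ} (h : (x, y) ∈ visitedUnion d C f k) : x ∈ Icc 0 1 := by
  simp only [visitedUnion, mem_iUnion] at h
  obtain ⟨p, ⟨hm, -, -⟩, hx, -⟩ := h
  exact dyadicCube_subset_Icc hm hx

lemma abs_sub_le_of_mem_visitedUnion {d k : ℕ} {C ε : ℝ} {f : (Fin d → ℝ) → ℝ}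
    {x : Fin d → ℝ} {y : ℝ} (h : (x, y) ∈ visitedUnion d C f k)
    (hosc : ∀ x' ∈ Icc 0 1, dist x' x ≤ 1 / 2 ^ k → |f x' - f x| ≤ ε) :
    |y - f x| ≤ ε + C / 2 ^ k := by
  simp only [visitedUnion, mem_iUnion] at h
  obtain ⟨⟨m, j⟩, ⟨hm, -, hsup, hinf⟩, hx, hy⟩ := h
  have hclose : ∀ x' ∈ dyadicCube d k m, |f x' - f x| ≤ ε := fun x' hx' =>
    hosc x' (dyadicCube_subset_Icc hm hx') (dist_le_of_mem_dyadicCube hx hx')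
  have hne : (f '' dyadicCube d k m).Nonempty := ⟨f x, x, hx, rfl⟩
  have hsup_le : sSup (f '' dyadicCube d k m) ≤ f x + ε :=
    csSup_le hne <| forall_mem_image.2 fun x' hx' => by linarith [(abs_le.1 (hclose x' hx')).2]
  have hinf_ge : f x - ε ≤ sInf (f '' dyadicCube d k m) :=
    le_csInf hne <| forall_mem_image.2 fun x' hx' => by linarith [(abs_le.1 (hclose x' hx')).1]
  have hheight : ((j : ℝ) + 1) * C / 2 ^ k = (j : ℝ) * C / 2 ^ k + C / 2 ^ k := by ring
  rw [abs_le]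
  constructor <;> linarith [hy.1, hy.2]

lemma eq_of_forall_mem_visitedUnion {d : ℕ} {C : ℝ} {f : (Fin d → ℝ) → ℝ} {x : Fin d → ℝ}
    {y : ℝ} (hcont : ContinuousWithinAt f (Icc 0 1) x)
    (hy : ∀ k, (x, y) ∈ visitedUnion d C f k) : y = f x := by
  refine eq_of_forall_dist_le fun ε hε => ?_
  obtain ⟨δ, hδ, hδf⟩ := Metric.continuousWithinAt_iff.1 hcont (ε / 2) (half_pos hε)
  have hmesh : Tendsto (fun k : ℕ => 1 / (2 : ℝ) ^ k) atTop (𝓝 0) := by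
    simpa only [one_div, inv_pow] using
      tendsto_pow_atTop_nhds_zero_of_lt_one (by norm_num : (0 : ℝ) ≤ 2⁻¹) (by norm_num)
  have hheight : Tendsto (fun k : ℕ => |C| / (2 : ℝ) ^ k) atTop (𝓝 0) := by
    simpa only [mul_one_div, mul_zero] using hmesh.const_mul |C|
  obtain ⟨k, hkδ, hkC⟩ :=
    ((hmesh.eventually (gt_mem_nhds hδ)).and (hheight.eventually (gt_mem_nhds (half_pos hε)))).exists
  have hosc : ∀ x' ∈ Icc 0 1, dist x' x ≤ 1 / 2 ^ k → |f x' - f x| ≤ ε / 2 :=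
    fun x' hx' hdist => (hδf hx' (hdist.trans_lt hkδ)).le
  have hCk : C / 2 ^ k ≤ |C| / 2 ^ k := by gcongr; exact le_abs_self C
  rw [Real.dist_eq]
  linarith [abs_sub_le_of_mem_visitedUnion (hy k) hosc]

theorem stmt8_general (d : ℕ) (C : ℝ)
    (f : (Fin d → ℝ) → ℝ)
    (hcont : volume {x ∈ Set.Icc (0 : Fin d → ℝ) 1 |
        ¬ ContinuousWithinAt f (Set.Icc 0 1) x} = 0) :
    volume (⋂ k : ℕ, visitedUnion d C f k) = 0 := by
  have hmeas : MeasurableSet (⋂ k : ℕ, visitedUnion d C f k) :=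
    .iInter (measurableSet_visitedUnion d C f)
  have hae : ∀ᵐ x : Fin d → ℝ, x ∈ Icc 0 1 → ContinuousWithinAt f (Icc 0 1) x := by
    simpa only [ae_iff, Classical.not_imp] using hcont
  rw [Measure.volume_eq_prod]
  refine Measure.prod_null_of_ae_slice_subset_singleton hmeas ?_
  filter_upwards [hae] with x hx
  refine ⟨f x, fun y hy => ?_⟩
  have hy : ∀ k, (x, y) ∈ visitedUnion d C f k := mem_iInter.1 hy
  exact eq_of_forall_mem_visitedUnion (hx (mem_Icc_of_mem_visitedUnion (hy 0))) hy

/-- Theorem 2: if `f` is continuous at Lebesgue-almost every point of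
`[0,1]^d`, then the `(d+1)`-dimensional Lebesgue measure of `⋂_k U_k` is zero. -/
theorem stmt8 (d : ℕ) (hd : 1 ≤ d) (C : ℝ) (hC : 0 < C)
    (f : (Fin d → ℝ) → ℝ)
    (hf : ∀ x ∈ Set.Icc (0 : Fin d → ℝ) 1, f x ∈ Set.Icc 0 C)
    (hcont : volume {x ∈ Set.Icc (0 : Fin d → ℝ) 1 |
        ¬ ContinuousWithinAt f (Set.Icc 0 1) x} = 0) :
    volume (⋂ k : ℕ, visitedUnion d C f k) = 0 :=
  stmt8_general d C f hcont
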